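/- The longest-time-to-go-first policy maximises the instantaneous available power: if z*(·) is the closed-loop trajectory under the policy and z̃(·) is any other trajectory fulfilling the same feasible reference from the same initial state, then P̄^r(z*(t)) ≥ P̄^r(z̃(t)) for all t ≥ 0, where P̄^r(x) = Σ_{i : x_i > 0} p̄_i. -/

import Mathlib

open Set

/-- A power reference signal `Pr` is feasible for devices with maximum powers `pbar`
and initial times-to-go `x`. -/
def Feasible (n : ℕ) (pbar x : Fin n → ℝ) (Pr : ℝ → ℝ) : Prop :=
  ∃ u z : ℝ → Fin n → ℝ,
    (∀ i, z 0 i = x i) ∧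
    (∀ t, 0 ≤ t → ∀ i, u t i ∈ Set.Icc 0 (pbar i)) ∧
    (∀ t, 0 ≤ t → ∑ i, u t i = Pr t) ∧
    (∀ t, 0 ≤ t → ∀ i, HasDerivAt (fun s => z s i) (-(u t i) / pbar i) t) ∧
    (∀ t, 0 ≤ t → ∀ i, 0 ≤ z t i)

/-- Truncation of a reference signal to `[0, t)`. -/
noncomputable def trunc (Pr : ℝ → ℝ) (t : ℝ) : ℝ → ℝ :=
  fun τ => if τ ∈ Set.Ico 0 t then Pr τ else 0

/-- Time to failure: supremum of times `t` such that the truncated reference is feasible. -/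
noncomputable def timeToFailure (n : ℕ) (pbar x : Fin n → ℝ) (Pr : ℝ → ℝ) : ENNReal :=
  ⨆ t ∈ {t : ℝ | 0 ≤ t ∧ Feasible n pbar x (trunc Pr t)}, ENNReal.ofReal t

/-- Maximum instantaneous power available in state `x`. -/
noncomputable def availPower (n : ℕ) (pbar x : Fin n → ℝ) : ℝ :=
  ∑ i ∈ Finset.univ.filter (fun i => 0 < x i), pbar i

/-- The longest-time-to-go-first (waterfall) policy: device `i` (if nonempty) runs at
the common fraction of maximum power of its equal-time-to-go group, where the group's
fraction saturates the request left over by all strictly higher groups. -/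
noncomputable def kappa (n : ℕ) (pbar x : Fin n → ℝ) (Pr : ℝ) : Fin n → ℝ :=
  fun i =>
    if 0 < x i then
      pbar i * max 0 (min 1
        ((Pr - ∑ j ∈ Finset.univ.filter (fun j => x i < x j), pbar j) /
          (∑ j ∈ Finset.univ.filter (fun j => x j = x i), pbar j)))
    else 0

/-- Closed-loop dynamics under the policy `kappa`. -/
def ClosedLoop (n : ℕ) (pbar : Fin n → ℝ) (Pr : ℝ → ℝ) (z : ℝ → Fin n → ℝ) : Prop :=
  ∀ t, 0 ≤ t → ∀ i,
    HasDerivAt (fun s => z s i) (-(kappa n pbar (z t) (Pr t) i) / pbar i) t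

/-- A state trajectory fulfils a reference signal (for all `t ≥ 0`). -/
def Fulfils (n : ℕ) (pbar : Fin n → ℝ) (Pr : ℝ → ℝ) (z : ℝ → Fin n → ℝ) : Prop :=
  ∃ u : ℝ → Fin n → ℝ,
    (∀ t, 0 ≤ t → ∀ i, u t i ∈ Set.Icc 0 (pbar i)) ∧
    (∀ t, 0 ≤ t → ∑ i, u t i = Pr t) ∧
    (∀ t, 0 ≤ t → ∀ i, HasDerivAt (fun s => z s i) (-(u t i) / pbar i) t) ∧
    (∀ t, 0 ≤ t → ∀ i, 0 ≤ z t i)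

/-- A state trajectory fulfils a reference signal on `[0, T]`. -/
def FulfilsOn (n : ℕ) (pbar : Fin n → ℝ) (Pr : ℝ → ℝ) (z : ℝ → Fin n → ℝ) (T : ℝ) : Prop :=
  ∃ u : ℝ → Fin n → ℝ,
    (∀ s ∈ Set.Icc 0 T, ∀ i, u s i ∈ Set.Icc 0 (pbar i)) ∧
    (∀ s ∈ Set.Icc 0 T, ∑ i, u s i = Pr s) ∧
    (∀ s ∈ Set.Icc 0 T, ∀ i, HasDerivAt (fun r => z r i) (-(u s i) / pbar i) s) ∧
    (∀ s ∈ Set.Icc 0 T, ∀ i, 0 ≤ z s i)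

/-- Closed-loop dynamics under the policy `kappa`, on `[0, T]`. -/
def ClosedLoopOn (n : ℕ) (pbar : Fin n → ℝ) (Pr : ℝ → ℝ) (z : ℝ → Fin n → ℝ) (T : ℝ) : Prop :=
  ∀ s ∈ Set.Icc 0 T, ∀ i,
    HasDerivAt (fun r => z r i) (-(kappa n pbar (z s) (Pr s) i) / pbar i) s


/-!
If the policy has emptied a set `A` of devices by time `T`, then `A` stays below all other
devices on `[0, T]`, because the policy never lets a lower time-to-go overtake a higher one.
The policy discharges such a bottom set only as much as the devices above it cannot cover,
so any other fulfilling input discharges `A` at least as fast. Weighting the times-to-go by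
`pbar`, the devices of `A` are therefore empty at time `T` in any other fulfilling trajectory
as well. So the support of `z̃(t)` lies in that of `z*(t)`, and `availPower` grows with the
support.
-/

open Finset

lemma le_of_max_zero_min_one_pos {α : Type*} [LinearOrder α] [Zero α] [One α] {q : α}
    (h : 0 < max 0 (min 1 q)) : max 0 (min 1 q) ≤ q := by
  rw [max_eq_right (lt_max_iff.1 h |>.resolve_left (lt_irrefl 0)).le]
  exact min_le_right 1 q

lemma sum_filter_lt_add_sum_filter_eq {ι α M : Type*} [Fintype ι] [DecidableEq ι]
    [LinearOrder α] [AddCommMonoid M] (x : ι → α) (f : ι → M) (i : ι) :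
    ∑ j with x i < x j, f j + ∑ j with x j = x i, f j = ∑ j with x i ≤ x j, f j := by
  rw [← sum_union (disjoint_filter.2 fun j _ h h' => h.ne' h')]
  congr 1
  ext j
  simp [le_iff_lt_or_eq, eq_comm]

lemma nonneg_of_hasDerivAt_nonneg_of_neg {d d' : ℝ → ℝ} {a b : ℝ} (hab : a ≤ b)
    (hd : ∀ t ∈ Set.Icc a b, HasDerivAt d (d' t) t) (ha : 0 ≤ d a)
    (hd' : ∀ t ∈ Set.Ico a b, d t < 0 → 0 ≤ d' t) : 0 ≤ d b := by
  -- `-d` stays below every barrier `ε (t - a) + ε`, which it could only reach while `d < 0`.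
  have hbarrier : ∀ ε > 0, -d b ≤ ε * (b - a) + ε := fun ε hε =>
    image_le_of_deriv_right_lt_deriv_boundary (f := fun t => -d t)
      (B := fun t => ε * (t - a) + ε) (B' := fun _ => ε * 1)
      (fun t ht => (hd t ht).neg.continuousAt.continuousWithinAt)
      (fun t ht => (hd t (Set.Ico_subset_Icc_self ht)).neg.hasDerivWithinAt)
      (by simp only [sub_self, mul_zero, zero_add]; linarith)
      (fun t => (((hasDerivAt_id' t).sub_const a).const_mul ε).add_const ε)
      (fun t ht heq => by
        have hneg : d t < 0 := by nlinarith [mul_nonneg hε.le (sub_nonneg.2 ht.1)]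
        linarith [hd' t ht hneg])
      ⟨hab, le_rfl⟩
  have hlim : Filter.Tendsto (fun ε : ℝ => ε * (b - a) + ε) (nhdsWithin 0 (Set.Ioi 0))
      (nhds 0) := by
    have : Continuous fun ε : ℝ => ε * (b - a) + ε := by fun_prop
    simpa using (this.tendsto 0).mono_left nhdsWithin_le_nhds
  exact neg_nonpos.1 (ge_of_tendsto hlim (eventually_nhdsWithin_of_forall hbarrier))

noncomputable def groupFraction (n : ℕ) (pbar x : Fin n → ℝ) (P : ℝ) (i : Fin n) : ℝ :=
  max 0 (min 1 ((P - ∑ j with x i < x j, pbar j) / ∑ j with x j = x i, pbar j))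

section Waterfall

variable {n : ℕ} {pbar x : Fin n → ℝ} {P : ℝ}

lemma kappa_of_pos {i : Fin n} (hi : 0 < x i) :
    kappa n pbar x P i = pbar i * groupFraction n pbar x P i :=
  if_pos hi

lemma pos_of_kappa_pos {i : Fin n} (h : 0 < kappa n pbar x P i) : 0 < x i := by
  by_contra hx
  simp [kappa, hx] at h

lemma groupFraction_congr {i j : Fin n} (h : x i = x j) :
    groupFraction n pbar x P i = groupFraction n pbar x P j := by
  simp only [groupFraction, h]

lemma kappa_nonneg (hp : ∀ i, 0 < pbar i) (i : Fin n) : 0 ≤ kappa n pbar x P i := by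
  unfold kappa
  split_ifs
  · exact mul_nonneg (hp i).le (le_max_left _ _)
  · rfl

lemma kappa_le_pbar (hp : ∀ i, 0 < pbar i) (i : Fin n) : kappa n pbar x P i ≤ pbar i := by
  unfold kappa
  split_ifs
  · exact mul_le_of_le_one_right (hp i).le (max_le zero_le_one (min_le_left _ _))
  · exact (hp i).le

lemma sum_level_pos (hp : ∀ i, 0 < pbar i) (i : Fin n) : 0 < ∑ j with x j = x i, pbar j :=
  sum_pos (fun j _ => hp j) ⟨i, by simp⟩

lemma groupFraction_mul_le (hp : ∀ i, 0 < pbar i) {i : Fin n}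
    (h : 0 < kappa n pbar x P i) :
    groupFraction n pbar x P i * ∑ j with x j = x i, pbar j ≤
      P - ∑ j with x i < x j, pbar j := by
  rw [← le_div_iff₀ (sum_level_pos hp i)]
  rw [kappa_of_pos (pos_of_kappa_pos h)] at h
  exact le_of_max_zero_min_one_pos (pos_of_mul_pos_right h (hp i).le)

lemma kappa_eq_pbar_of_lt (hp : ∀ i, 0 < pbar i) {i j : Fin n} (hij : x i < x j)
    (hi : 0 < kappa n pbar x P i) : kappa n pbar x P j = pbar j := by
  have hfrac := groupFraction_mul_le hp hi
  have hfrac_nonneg : 0 ≤ groupFraction n pbar x P i * ∑ k with x k = x i, pbar k :=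
    mul_nonneg (le_max_left _ _) (sum_level_pos hp i).le
  have hupper : ∑ k with x j ≤ x k, pbar k ≤ ∑ k with x i < x k, pbar k :=
    sum_le_sum_of_subset_of_nonneg (monotone_filter_right _ fun k _ h => hij.trans_le h)
      fun k _ _ => (hp k).le
  have hsplit := sum_filter_lt_add_sum_filter_eq x pbar j
  have hone : 1 ≤ (P - ∑ k with x j < x k, pbar k) / ∑ k with x k = x j, pbar k :=
    (one_le_div (sum_level_pos hp j)).2 (by linarith)
  rw [kappa_of_pos ((pos_of_kappa_pos hi).trans hij), groupFraction, min_eq_left hone,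
    max_eq_right zero_le_one, mul_one]

lemma kappa_div_le_of_lt (hp : ∀ i, 0 < pbar i) {i j : Fin n} (hij : x i < x j) :
    kappa n pbar x P i / pbar i ≤ kappa n pbar x P j / pbar j := by
  rcases (kappa_nonneg hp i).eq_or_lt with h | h
  · rw [← h, zero_div]
    exact div_nonneg (kappa_nonneg hp j) (hp j).le
  · rw [kappa_eq_pbar_of_lt hp hij h, div_self (hp j).ne']
    exact (div_le_one (hp i)).2 (kappa_le_pbar hp i)

lemma sum_kappa_filter_le_le (hp : ∀ i, 0 < pbar i) {i : Fin n}
    (hi : 0 < kappa n pbar x P i) : ∑ j with x i ≤ x j, kappa n pbar x P j ≤ P := by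
  rw [← sum_filter_lt_add_sum_filter_eq]
  have hlevel : ∑ j with x j = x i, kappa n pbar x P j =
      groupFraction n pbar x P i * ∑ j with x j = x i, pbar j := by
    rw [mul_sum]
    refine sum_congr rfl fun j hj => ?_
    have hj : x j = x i := (mem_filter.1 hj).2
    rw [kappa_of_pos (hj ▸ pos_of_kappa_pos hi), groupFraction_congr hj, mul_comm]
  have habove : ∑ j with x i < x j, kappa n pbar x P j ≤ ∑ j with x i < x j, pbar j :=
    sum_le_sum fun j _ => kappa_le_pbar hp j
  linarith [groupFraction_mul_le hp hi]

lemma sum_kappa_le_of_lt (hp : ∀ i, 0 < pbar i) {A : Finset (Fin n)}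
    (hA : ∀ j ∈ A, ∀ k ∉ A, x j < x k) :
    ∑ j ∈ A, kappa n pbar x P j ≤ max 0 (P - ∑ k ∈ Aᶜ, pbar k) := by
  by_cases hidle : ∀ j ∈ A, kappa n pbar x P j ≤ 0
  · exact (sum_nonpos hidle).trans (le_max_left _ _)
  push Not at hidle
  obtain ⟨i, hi, hmin⟩ := (A.filter fun j => 0 < kappa n pbar x P j).exists_min_image x
    (by simpa [Finset.Nonempty] using hidle)
  rw [mem_filter] at hi
  have hbelow : ∑ j ∈ A with x i ≤ x j, kappa n pbar x P j = ∑ j ∈ A, kappa n pbar x P j :=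
    sum_filter_of_ne fun j hj hne =>
      hmin j (mem_filter.2 ⟨hj, (kappa_nonneg hp j).lt_of_ne' hne⟩)
  have hcompl : ∑ k ∈ Aᶜ, kappa n pbar x P k = ∑ k ∈ Aᶜ, pbar k :=
    sum_congr rfl fun k hk => kappa_eq_pbar_of_lt hp (hA i hi.1 k (mem_compl.1 hk)) hi.2
  have hsub : (A.filter fun j => x i ≤ x j) ∪ Aᶜ ⊆ univ.filter fun j => x i ≤ x j := by
    intro j
    simp only [Finset.mem_union, mem_filter, Finset.mem_compl, Finset.mem_univ, true_and]
    rintro (⟨_, h⟩ | hj)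
    exacts [h, (hA i hi.1 j hj).le]
  have hunion := sum_le_sum_of_subset_of_nonneg hsub fun j _ _ =>
    kappa_nonneg (x := x) (P := P) hp j
  rw [sum_union (disjoint_compl_right.mono_left (filter_subset _ _))] at hunion
  linarith [sum_kappa_filter_le_le hp hi.2, le_max_right 0 (P - ∑ k ∈ Aᶜ, pbar k)]

lemma sum_kappa_le_sum_of_lt (hp : ∀ i, 0 < pbar i) {A : Finset (Fin n)}
    (hA : ∀ j ∈ A, ∀ k ∉ A, x j < x k) {u : Fin n → ℝ}
    (hu : ∀ i, u i ∈ Set.Icc 0 (pbar i)) (hsum : ∑ i, u i = P) :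
    ∑ j ∈ A, kappa n pbar x P j ≤ ∑ j ∈ A, u j := by
  refine (sum_kappa_le_of_lt hp hA).trans (max_le (sum_nonneg fun j _ => (hu j).1) ?_)
  linarith [sum_add_sum_compl A u, sum_le_sum fun k (_ : k ∈ Aᶜ) => (hu k).2]

end Waterfall

lemma hasDerivAt_sum_mul {n : ℕ} {pbar : Fin n → ℝ} (hp : ∀ i, pbar i ≠ 0)
    (A : Finset (Fin n)) {z : ℝ → Fin n → ℝ} {v : Fin n → ℝ} {t : ℝ}
    (h : ∀ i, HasDerivAt (fun s => z s i) (-(v i) / pbar i) t) :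
    HasDerivAt (fun s => ∑ i ∈ A, pbar i * z s i) (-∑ i ∈ A, v i) t := by
  refine (HasDerivAt.fun_sum fun i (_ : i ∈ A) => (h i).const_mul (pbar i)).congr_deriv ?_
  rw [← sum_neg_distrib]
  exact sum_congr rfl fun i _ => by field_simp [hp i]

namespace ClosedLoop

variable {n : ℕ} {pbar : Fin n → ℝ} {Pr : ℝ → ℝ} {z : ℝ → Fin n → ℝ}

lemma preserves_le (hp : ∀ i, 0 < pbar i) (hcl : ClosedLoop n pbar Pr z) {j k : Fin n}
    {t₀ t₁ : ℝ} (ht₀ : 0 ≤ t₀) (ht : t₀ ≤ t₁) (h : z t₀ k ≤ z t₀ j) : z t₁ k ≤ z t₁ j := by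
  refine sub_nonneg.1 (nonneg_of_hasDerivAt_nonneg_of_neg (d := fun t => z t j - z t k) ht
    (fun t ht' => (hcl t (ht₀.trans ht'.1) j).sub (hcl t (ht₀.trans ht'.1) k))
    (sub_nonneg.2 h) fun t _ hneg => ?_)
  have := kappa_div_le_of_lt (x := z t) (P := Pr t) hp (sub_neg.1 hneg)
  simp only [neg_div]
  linarith

lemma nonpos_of_fulfils (hp : ∀ i, 0 < pbar i) (hcl : ClosedLoop n pbar Pr z)
    {z' : ℝ → Fin n → ℝ} (hf : Fulfils n pbar Pr z') (h0 : z 0 = z' 0) {T : ℝ} (hT : 0 ≤ T)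
    {i : Fin n} (hi : z T i ≤ 0) : z' T i ≤ 0 := by
  obtain ⟨u, hu, hsum, hderiv, hnonneg⟩ := hf
  set A : Finset (Fin n) := {j | z T j ≤ 0}
  have hlower : ∀ t ∈ Set.Icc 0 T, ∀ j ∈ A, ∀ k ∉ A, z t j < z t k := by
    intro t ht j hj k hk
    simp only [A, mem_filter, Finset.mem_univ, true_and, not_le] at hj hk
    by_contra hle
    linarith [hcl.preserves_le hp ht.1 ht.2 (not_lt.1 hle)]
  have hgap := nonneg_of_hasDerivAt_nonneg_of_neg
    (d := fun t => ∑ j ∈ A, pbar j * z t j - ∑ j ∈ A, pbar j * z' t j) hT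
    (fun t ht => (hasDerivAt_sum_mul (fun j => (hp j).ne') A (hcl t ht.1)).sub
      (hasDerivAt_sum_mul (fun j => (hp j).ne') A (hderiv t ht.1)))
    (by simp [h0]) fun t ht _ => by
      linarith [sum_kappa_le_sum_of_lt hp (hlower t (Set.Ico_subset_Icc_self ht))
        (hu t ht.1) (hsum t ht.1)]
  have hz : ∑ j ∈ A, pbar j * z T j ≤ 0 :=
    sum_nonpos fun j hj => mul_nonpos_of_nonneg_of_nonpos (hp j).le (mem_filter.1 hj).2
  have hz' : pbar i * z' T i ≤ ∑ j ∈ A, pbar j * z' T j :=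
    single_le_sum (fun j _ => mul_nonneg (hp j).le (hnonneg T hT j)) (by simpa [A] using hi)
  exact nonpos_of_mul_nonpos_right (by linarith) (hp i)

end ClosedLoop

theorem closedLoop_maximises_availPower_general (n : ℕ) (pbar : Fin n → ℝ) (Pr : ℝ → ℝ)
    (zt zs : ℝ → Fin n → ℝ) (hp : ∀ i, 0 < pbar i)
    (hf : Fulfils n pbar Pr zt)
    (h0 : zs 0 = zt 0) (hcl : ClosedLoop n pbar Pr zs) :
    ∀ t, 0 ≤ t → availPower n pbar (zt t) ≤ availPower n pbar (zs t) := by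
  intro t ht
  refine sum_le_sum_of_subset_of_nonneg (fun i => ?_) fun i _ _ => (hp i).le
  simp only [mem_filter, Finset.mem_univ, true_and]
  contrapose!
  exact hcl.nonpos_of_fulfils hp hf h0 ht

/-- the policy maximises the instantaneous available power among all
trajectories fulfilling the same reference from the same initial state. -/
theorem closedLoop_maximises_availPower (n : ℕ) (pbar : Fin n → ℝ) (Pr : ℝ → ℝ)
    (zt zs : ℝ → Fin n → ℝ) (hp : ∀ i, 0 < pbar i)
    (hf : Fulfils n pbar Pr zt)
    (h0 : zs 0 = zt 0) (hcl : ClosedLoop n pbar Pr zs)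
    (hnn : ∀ t, 0 ≤ t → ∀ i, 0 ≤ zs t i) :
    ∀ t, 0 ≤ t → availPower n pbar (zt t) ≤ availPower n pbar (zs t) :=
  closedLoop_maximises_availPower_general n pbar Pr zt zs hp hf h0 hcl
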